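/- Let n ≥ 2. Suppose w_1, ..., w_n and v_1, ..., v_n are two ℤ-bases of ℤ^n satisfying v_1 = -w_1 and v_2 = -w_2, and suppose there exists a permutation π of {1,...,n} such that for every i, w_i - v_{π(i)} is an integer multiple of w_1. Then a contradiction follows (no such data exist). -/

import Mathlib

/-!
Take `k = π⁻¹ 1`. Since `v₁ = -w₁`, the hypothesis at `k` says that `w_k + w₁` is a multiple of
`w₀`; but the `w₁`-coordinate of `w_k + w₁` is `1` or `2`, never `0`.
-/

namespace Module.Basis

variable {ι R M : Type*} [Ring R] [AddCommGroup M] [Module R M] (b : Basis ι R M)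

theorem add_notMem_span_singleton [NeZero (2 : R)] (i : ι) {j k : ι} (hj : j ≠ k) :
    b i + b j ∉ R ∙ b k := by
  intro h
  obtain ⟨a, ha⟩ := Submodule.mem_span_singleton.mp h
  have hcoord := congr_arg (fun x => b.repr x j) ha
  simp only [map_add, map_smul, repr_self, Finsupp.add_apply, Finsupp.smul_apply,
    Finsupp.single_eq_same, Finsupp.single_eq_of_ne hj, smul_zero] at hcoord
  rcases eq_or_ne i j with rfl | hij
  · rw [Finsupp.single_eq_same, one_add_one_eq_two] at hcoord
    exact two_ne_zero hcoord.symm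
  · rw [Finsupp.single_eq_of_ne' hij, zero_add] at hcoord
    exact two_ne_zero (by rw [← one_add_one_eq_two, ← hcoord, add_zero] : (2 : R) = 0)

end Module.Basis

theorem stmt_6 (n : ℕ) (hn : 2 ≤ n)
    (w v : Module.Basis (Fin n) ℤ (Fin n → ℤ))
    (h2 : v ⟨1, by omega⟩ = -w ⟨1, by omega⟩)
    (π : Equiv.Perm (Fin n))
    (hmod : ∀ i : Fin n, ∃ a : ℤ, w i - v (π i) = a • w ⟨0, by omega⟩) :
    False := by
  set z₁ : Fin n := ⟨1, by omega⟩
  obtain ⟨a, ha⟩ := hmod (π.symm z₁)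
  rw [π.apply_symm_apply, h2, sub_neg_eq_add] at ha
  exact w.add_notMem_span_singleton (π.symm z₁) (by simp [z₁, Fin.ext_iff])
    (Submodule.mem_span_singleton.mpr ⟨a, ha.symm⟩)
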